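/- Fix dimensions d, m and constants K, θ, C ≥ 0. Let A ⊆ ℝ^m be nonempty, let M : ℝ^d → ℝ^d be a linear map, let a : ℝ^d → A, b : A → ℝ^d, f : A → ℝ satisfy: ‖a(z) − a(z')‖ ≤ √θ‖z − z'‖ for all z, z' ∈ ℝ^d; ‖b(p) − b(q)‖ ≤ √θ‖p − q‖ for all p, q ∈ A; |⟨b(p), M w⟩| ≤ K‖w‖ for all p ∈ A and w ∈ ℝ^d; |f(p) − f(q)| ≤ √θ‖p − q‖ for all p, q ∈ A. Define F(z, Z) := ⟨b(a(z)), M Z⟩ + f(a(z)) for z, Z ∈ ℝ^d. Then for all Z, z', Z' ∈ ℝ^d with ‖M Z‖ ≤ C one has |F(Z, Z) − F(z', Z')| ≤ (Cθ + θ)‖Z − z'‖ + K‖Z − Z'‖. -/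

import Mathlib

/-!
Split `F(Z, Z) - F(z', Z')` as `⟨b(a Z) - b(a z'), M Z⟩ + ⟨b(a z'), M (Z - Z')⟩ + (f(a Z) - f(a z'))`.
The first term is controlled by Cauchy–Schwarz and `‖M Z‖ ≤ C`, the second by the bound on
`⟨b(·), M ·⟩`, and the third directly; in the first and third the two `√θ`-Lipschitz maps
compose to a `θ`-Lipschitz one.
-/

open RealInnerProductSpace

section

variable {E F G : Type*} [SeminormedAddCommGroup E] [SeminormedAddCommGroup F]
  [SeminormedAddCommGroup G]

theorem norm_comp_sub_comp_le {A : Set F} {a : E → F} {g : F → G} {s t : ℝ}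
    (haA : ∀ z, a z ∈ A) (ht : 0 ≤ t) (ha : ∀ z z', ‖a z - a z'‖ ≤ s * ‖z - z'‖)
    (hg : ∀ p ∈ A, ∀ q ∈ A, ‖g p - g q‖ ≤ t * ‖p - q‖) (z z' : E) :
    ‖g (a z) - g (a z')‖ ≤ t * s * ‖z - z'‖ :=
  calc ‖g (a z) - g (a z')‖ ≤ t * ‖a z - a z'‖ := hg _ (haA z) _ (haA z')
    _ ≤ t * (s * ‖z - z'‖) := mul_le_mul_of_nonneg_left (ha z z') ht
    _ = t * s * ‖z - z'‖ := (mul_assoc _ _ _).symm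

end

section

variable {D E : Type*} [SeminormedAddCommGroup D] [NormedSpace ℝ D]
  [NormedAddCommGroup E] [InnerProductSpace ℝ E]

theorem inner_sub_inner_eq (u u' v v' : E) :
    ⟪u, v⟫ - ⟪u', v'⟫ = ⟪u - u', v⟫ + ⟪u', v - v'⟫ := by
  rw [inner_sub_left, inner_sub_right]
  ring

theorem abs_inner_map_add_sub_le (M : D →ₗ[ℝ] E) {β : D → E} {φ : D → ℝ} {K L L' C : ℝ}
    (hβ : ∀ z z', ‖β z - β z'‖ ≤ L * ‖z - z'‖) (hφ : ∀ z z', |φ z - φ z'| ≤ L' * ‖z - z'‖)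
    (hβM : ∀ z w, |⟪β z, M w⟫| ≤ K * ‖w‖) {Z : D} (hMZ : ‖M Z‖ ≤ C) (z' Z' : D) :
    |(⟪β Z, M Z⟫ + φ Z) - (⟪β z', M Z'⟫ + φ z')| ≤ (C * L + L') * ‖Z - z'‖ + K * ‖Z - Z'‖ := by
  have hdrift : |⟪β Z - β z', M Z⟫| ≤ C * L * ‖Z - z'‖ :=
    calc |⟪β Z - β z', M Z⟫| ≤ ‖β Z - β z'‖ * ‖M Z‖ := abs_real_inner_le_norm _ _
      _ ≤ L * ‖Z - z'‖ * C :=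
        mul_le_mul (hβ Z z') hMZ (norm_nonneg _) ((norm_nonneg _).trans (hβ Z z'))
      _ = C * L * ‖Z - z'‖ := by ring
  have hcontrol : |⟪β z', M (Z - Z')⟫| ≤ K * ‖Z - Z'‖ := hβM z' (Z - Z')
  have hsplit : (⟪β Z, M Z⟫ + φ Z) - (⟪β z', M Z'⟫ + φ z')
      = ⟪β Z - β z', M Z⟫ + ⟪β z', M (Z - Z')⟫ + (φ Z - φ z') := by
    rw [map_sub, ← inner_sub_inner_eq]
    ring
  rw [hsplit]
  calc _ ≤ |⟪β Z - β z', M Z⟫| + |⟪β z', M (Z - Z')⟫| + |φ Z - φ z'| := abs_add_three _ _ _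
    _ ≤ C * L * ‖Z - z'‖ + K * ‖Z - Z'‖ + L' * ‖Z - z'‖ := by
      gcongr
      exact hφ Z z'
    _ = (C * L + L') * ‖Z - z'‖ + K * ‖Z - Z'‖ := by ring

end

theorem stmt_3_general {d m : ℕ} (K θ C : ℝ) (hθ : 0 ≤ θ)
    (A : Set (EuclideanSpace ℝ (Fin m)))
    (M : EuclideanSpace ℝ (Fin d) →ₗ[ℝ] EuclideanSpace ℝ (Fin d))
    (a : EuclideanSpace ℝ (Fin d) → EuclideanSpace ℝ (Fin m))
    (b : EuclideanSpace ℝ (Fin m) → EuclideanSpace ℝ (Fin d))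
    (f : EuclideanSpace ℝ (Fin m) → ℝ)
    (haA : ∀ z, a z ∈ A)
    (ha : ∀ z z' : EuclideanSpace ℝ (Fin d), ‖a z - a z'‖ ≤ Real.sqrt θ * ‖z - z'‖)
    (hb : ∀ p ∈ A, ∀ q ∈ A, ‖b p - b q‖ ≤ Real.sqrt θ * ‖p - q‖)
    (hbM : ∀ p ∈ A, ∀ w : EuclideanSpace ℝ (Fin d), |(inner ℝ (b p) (M w) : ℝ)| ≤ K * ‖w‖)
    (hf : ∀ p ∈ A, ∀ q ∈ A, |f p - f q| ≤ Real.sqrt θ * ‖p - q‖)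
    (F : EuclideanSpace ℝ (Fin d) → EuclideanSpace ℝ (Fin d) → ℝ)
    (hF : ∀ z Z, F z Z = (inner ℝ (b (a z)) (M Z) : ℝ) + f (a z)) :
    ∀ Z z' Z' : EuclideanSpace ℝ (Fin d), ‖M Z‖ ≤ C →
      |F Z Z - F z' Z'| ≤ (C * θ + θ) * ‖Z - z'‖ + K * ‖Z - Z'‖ := by
  intro Z z' Z' hMZ
  have hθ_sq : Real.sqrt θ * Real.sqrt θ = θ := Real.mul_self_sqrt hθ
  have hba : ∀ z z', ‖b (a z) - b (a z')‖ ≤ θ * ‖z - z'‖ := by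
    simpa only [hθ_sq] using norm_comp_sub_comp_le haA (Real.sqrt_nonneg θ) ha hb
  have hfa : ∀ z z', |f (a z) - f (a z')| ≤ θ * ‖z - z'‖ := by
    simpa only [hθ_sq, Real.norm_eq_abs] using
      norm_comp_sub_comp_le (g := f) haA (Real.sqrt_nonneg θ) ha (by simpa only [Real.norm_eq_abs])
  rw [hF, hF]
  exact abs_inner_map_add_sub_le M hba hfa (fun z => hbM _ (haA z)) hMZ z' Z'

/-- Estimate (4.5): Lipschitz bound for the two-argument BSDE generator of the
policy improvement algorithm, with the coefficients frozen at a point. -/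
theorem stmt_3 {d m : ℕ} (K θ C : ℝ) (hK : 0 ≤ K) (hθ : 0 ≤ θ) (hC : 0 ≤ C)
    (A : Set (EuclideanSpace ℝ (Fin m))) (hA : A.Nonempty)
    (M : EuclideanSpace ℝ (Fin d) →ₗ[ℝ] EuclideanSpace ℝ (Fin d))
    (a : EuclideanSpace ℝ (Fin d) → EuclideanSpace ℝ (Fin m))
    (b : EuclideanSpace ℝ (Fin m) → EuclideanSpace ℝ (Fin d))
    (f : EuclideanSpace ℝ (Fin m) → ℝ)
    (haA : ∀ z, a z ∈ A)
    (ha : ∀ z z' : EuclideanSpace ℝ (Fin d), ‖a z - a z'‖ ≤ Real.sqrt θ * ‖z - z'‖)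
    (hb : ∀ p ∈ A, ∀ q ∈ A, ‖b p - b q‖ ≤ Real.sqrt θ * ‖p - q‖)
    (hbM : ∀ p ∈ A, ∀ w : EuclideanSpace ℝ (Fin d), |(inner ℝ (b p) (M w) : ℝ)| ≤ K * ‖w‖)
    (hf : ∀ p ∈ A, ∀ q ∈ A, |f p - f q| ≤ Real.sqrt θ * ‖p - q‖)
    (F : EuclideanSpace ℝ (Fin d) → EuclideanSpace ℝ (Fin d) → ℝ)
    (hF : ∀ z Z, F z Z = (inner ℝ (b (a z)) (M Z) : ℝ) + f (a z)) :
    ∀ Z z' Z' : EuclideanSpace ℝ (Fin d), ‖M Z‖ ≤ C →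
      |F Z Z - F z' Z'| ≤ (C * θ + θ) * ‖Z - z'‖ + K * ‖Z - Z'‖ :=
  stmt_3_general K θ C hθ A M a b f haA ha hb hbM hf F hF
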